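/- The Piecewise Mechanism satisfies ε-LDP: for ε > 0 and x ∈ [−1,1], define l(x) = (e^{ε/2}·x − 1)/(e^{ε/2} − 1), r(x) = (e^{ε/2}·x + 1)/(e^{ε/2} − 1), and the output interval C = [−(e^{ε/2}+1)/(e^{ε/2}−1), (e^{ε/2}+1)/(e^{ε/2}−1)]. The mechanism R_PM(x) outputs v ∈ C with probability density (e^{ε/2}/2)·(e^{ε/2}−1)/(e^{ε/2}+1) if v ∈ [l(x), r(x)], and density (1/(2e^{ε/2}))·(e^{ε/2}−1)/(e^{ε/2}+1) if v ∈ C \ [l(x), r(x)]. Then this density is a valid probability density on C for every x ∈ [−1,1], and for every pair x, x' ∈ [−1,1] and every v ∈ C the ratio of the densities of R_PM(x) and R_PM(x') at v is at most e^ε; consequently R_PM satisfies ε-LDP on the input domain [−1,1]. -/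

import Mathlib

open MeasureTheory

/-- The left endpoint `l(x) = (e^{ε/2}·x − 1)/(e^{ε/2} − 1)` of the high-probability
interval of the Piecewise Mechanism. -/
noncomputable def pmLeft (ε x : ℝ) : ℝ :=
  (Real.exp (ε / 2) * x - 1) / (Real.exp (ε / 2) - 1)

/-- The right endpoint `r(x) = (e^{ε/2}·x + 1)/(e^{ε/2} − 1)` of the high-probability
interval of the Piecewise Mechanism. -/
noncomputable def pmRight (ε x : ℝ) : ℝ :=
  (Real.exp (ε / 2) * x + 1) / (Real.exp (ε / 2) - 1)

/-- The output interval `C = [−(e^{ε/2}+1)/(e^{ε/2}−1), (e^{ε/2}+1)/(e^{ε/2}−1)]`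
of the Piecewise Mechanism. -/
noncomputable def pmC (ε : ℝ) : Set ℝ :=
  Set.Icc (-((Real.exp (ε / 2) + 1) / (Real.exp (ε / 2) - 1)))
    ((Real.exp (ε / 2) + 1) / (Real.exp (ε / 2) - 1))

/-- The density of the Piecewise Mechanism on the output interval `C`: it equals
`(e^{ε/2}/2)·(e^{ε/2}−1)/(e^{ε/2}+1)` on `[l(x), r(x)]` and
`(1/(2e^{ε/2}))·(e^{ε/2}−1)/(e^{ε/2}+1)` elsewhere on `C`. -/
noncomputable def pmDensity (ε x v : ℝ) : ℝ :=
  if v ∈ Set.Icc (pmLeft ε x) (pmRight ε x) then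
    Real.exp (ε / 2) / 2 * ((Real.exp (ε / 2) - 1) / (Real.exp (ε / 2) + 1))
  else
    1 / (2 * Real.exp (ε / 2)) * ((Real.exp (ε / 2) - 1) / (Real.exp (ε / 2) + 1))

/-- The Piecewise Mechanism: the distribution on the output interval `C` with density
`pmDensity ε x` with respect to Lebesgue measure restricted to `C`. -/
noncomputable def pmMechanism (ε x : ℝ) : Measure ℝ :=
  (volume.restrict (pmC ε)).withDensity fun v => ENNReal.ofReal (pmDensity ε x v)


lemma pm_one_lt (ε : ℝ) (hε : 0 < ε) : 1 < Real.exp (ε / 2) := by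
  rw [show (1:ℝ) = Real.exp 0 from (Real.exp_zero).symm]
  exact Real.exp_lt_exp.mpr (by linarith)

lemma pm_ratio (ε : ℝ) (hε : 0 < ε) (x x' v : ℝ) :
    pmDensity ε x v ≤ Real.exp ε * pmDensity ε x' v := by
  have ha := pm_one_lt ε hε
  have hee : Real.exp ε = Real.exp (ε / 2) * Real.exp (ε / 2) := by
    rw [← Real.exp_add]; ring_nf
  unfold pmDensity
  set a := Real.exp (ε / 2) with hadef
  have h0 : (0:ℝ) < a := by linarith
  have hk : (0:ℝ) ≤ (a - 1) / (a + 1) := div_nonneg (by linarith) (by linarith)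
  have hP : (0:ℝ) ≤ a / 2 * ((a - 1) / (a + 1)) := mul_nonneg (by positivity) hk
  have haa : (1:ℝ) ≤ a * a := by nlinarith
  have key : a * a * (1 / (2 * a) * ((a - 1) / (a + 1))) = a / 2 * ((a - 1) / (a + 1)) := by
    field_simp
  have hple : 1 / (2 * a) * ((a - 1) / (a + 1)) ≤ a / 2 * ((a - 1) / (a + 1)) := by
    apply mul_le_mul_of_nonneg_right _ hk
    rw [div_le_div_iff₀ (by linarith) (by norm_num)]; nlinarith
  split_ifs <;> rw [hee]
  · nlinarith [mul_nonneg (sub_nonneg.mpr haa) hP]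
  · rw [key]
  · nlinarith [mul_nonneg (sub_nonneg.mpr haa) hP]
  · rw [key]; exact hple

lemma pm_subset (ε : ℝ) (hε : 0 < ε) (x : ℝ) (hx : x ∈ Set.Icc (-1:ℝ) 1) :
    Set.Icc (pmLeft ε x) (pmRight ε x) ⊆ pmC ε := by
  have ha := pm_one_lt ε hε
  have hd : (0:ℝ) < Real.exp (ε / 2) - 1 := by linarith
  obtain ⟨hx1, hx2⟩ := hx
  unfold pmC pmLeft pmRight
  apply Set.Icc_subset_Icc
  · rw [show -((Real.exp (ε / 2) + 1) / (Real.exp (ε / 2) - 1))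
        = (-(Real.exp (ε / 2) + 1)) / (Real.exp (ε / 2) - 1) by ring]
    exact (div_le_div_iff_of_pos_right hd).mpr (by nlinarith)
  · exact (div_le_div_iff_of_pos_right hd).mpr (by nlinarith)

lemma pm_lr (ε : ℝ) (hε : 0 < ε) (x : ℝ) : pmLeft ε x ≤ pmRight ε x := by
  have ha := pm_one_lt ε hε
  have hd : (0:ℝ) < Real.exp (ε / 2) - 1 := by linarith
  exact (div_le_div_iff_of_pos_right hd).mpr (by linarith)

lemma pm_integral (ε : ℝ) (hε : 0 < ε) (x : ℝ) (hx : x ∈ Set.Icc (-1:ℝ) 1) :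
    (∫ v in pmC ε, pmDensity ε x v) = 1 := by
  have ha := pm_one_lt ε hε
  have hd : (0:ℝ) < Real.exp (ε / 2) - 1 := by linarith
  set a := Real.exp (ε / 2) with hadef
  set p : ℝ := a / 2 * ((a - 1) / (a + 1)) with hp
  set q : ℝ := 1 / (2 * a) * ((a - 1) / (a + 1)) with hq
  set l := pmLeft ε x
  set r := pmRight ε x
  set B : ℝ := (a + 1) / (a - 1) with hB
  have hfun : ∀ v, pmDensity ε x v = q + Set.indicator (Set.Icc l r) (fun _ => p - q) v := by
    intro v
    unfold pmDensity
    by_cases h : v ∈ Set.Icc l r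
    · rw [if_pos h, Set.indicator_of_mem h]; ring
    · rw [if_neg h, Set.indicator_of_notMem h]; ring
  have hCi : pmC ε = Set.Icc (-B) B := rfl
  have hB0 : (0:ℝ) ≤ B := le_of_lt (div_pos (by linarith) hd)
  have hsub := pm_subset ε hε x hx
  have hlr := pm_lr ε hε x
  calc (∫ v in pmC ε, pmDensity ε x v)
      = ∫ v in pmC ε, (q + Set.indicator (Set.Icc l r) (fun _ => p - q) v) := by
        simp_rw [hfun]
    _ = (∫ _ in pmC ε, q) + ∫ v in pmC ε, Set.indicator (Set.Icc l r) (fun _ => p - q) v := by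
        apply integral_add (integrableOn_const (C := q) ?_)
          ((integrable_indicator_iff measurableSet_Icc).2 (integrableOn_const (C := p - q) ?_))
        · rw [hCi, Real.volume_Icc]; exact ENNReal.ofReal_ne_top
        · rw [Measure.restrict_apply measurableSet_Icc, Set.inter_eq_left.mpr hsub,
            Real.volume_Icc]
          exact ENNReal.ofReal_ne_top
    _ = (2 * B) * q + (r - l) * (p - q) := by
        rw [integral_indicator measurableSet_Icc, setIntegral_const, setIntegral_const,
          measureReal_restrict_apply measurableSet_Icc, Set.inter_eq_left.mpr hsub, hCi,
          Real.volume_real_Icc, Real.volume_real_Icc,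
          max_eq_left (by linarith), max_eq_left (by linarith),
          smul_eq_mul, smul_eq_mul]
        ring
    _ = 1 := by
        have hrl : r - l = 2 / (a - 1) := by
          unfold r l; unfold pmRight pmLeft; rw [← hadef]; field_simp; ring
        rw [hrl, hB, hp, hq]
        field_simp
        ring

lemma pm_density_measurable (ε x : ℝ) : Measurable (pmDensity ε x) := by
  unfold pmDensity
  exact Measurable.ite measurableSet_Icc measurable_const measurable_const


/-- The Piecewise Mechanism satisfies `ε`-LDP: for `ε > 0`, (i) the density
`pmDensity ε x` is a valid probability density on the output interval `C` for every
`x ∈ [−1,1]`; (ii) for every `x, x' ∈ [−1,1]` and every `v ∈ C`, the ratio of the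
densities at `v` is at most `e^ε`; and consequently (iii) the mechanism satisfies
`ε`-LDP on the input domain `[−1,1]`. -/
theorem piecewise_mechanism_satisfies_LDP (ε : ℝ) (hε : 0 < ε) :
    (∀ x ∈ Set.Icc (-1 : ℝ) 1, (∫ v in pmC ε, pmDensity ε x v) = 1) ∧
    (∀ x ∈ Set.Icc (-1 : ℝ) 1, ∀ x' ∈ Set.Icc (-1 : ℝ) 1, ∀ v ∈ pmC ε,
      pmDensity ε x v ≤ Real.exp ε * pmDensity ε x' v) ∧
    (∀ x ∈ Set.Icc (-1 : ℝ) 1, ∀ x' ∈ Set.Icc (-1 : ℝ) 1, ∀ S : Set ℝ, MeasurableSet S →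
      pmMechanism ε x S ≤ ENNReal.ofReal (Real.exp ε) * pmMechanism ε x' S) := by
  refine ⟨fun x hx => pm_integral ε hε x hx,
    fun x _ x' _ v _ => pm_ratio ε hε x x' v, fun x _ x' _ S hS => ?_⟩
  rw [pmMechanism, pmMechanism, withDensity_apply _ hS, withDensity_apply _ hS]
  calc ∫⁻ v in S, ENNReal.ofReal (pmDensity ε x v) ∂(volume.restrict (pmC ε))
      ≤ ∫⁻ v in S, ENNReal.ofReal (Real.exp ε) * ENNReal.ofReal (pmDensity ε x' v)
          ∂(volume.restrict (pmC ε)) := by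
        apply lintegral_mono
        intro v
        show ENNReal.ofReal (pmDensity ε x v) ≤
          ENNReal.ofReal (Real.exp ε) * ENNReal.ofReal (pmDensity ε x' v)
        rw [← ENNReal.ofReal_mul (Real.exp_pos ε).le]
        exact ENNReal.ofReal_le_ofReal (pm_ratio ε hε x x' v)
    _ = ENNReal.ofReal (Real.exp ε) *
          ∫⁻ v in S, ENNReal.ofReal (pmDensity ε x' v) ∂(volume.restrict (pmC ε)) :=
        lintegral_const_mul' _ _ ENNReal.ofReal_ne_top
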